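/- arXiv:math/0608221 — 2 statements merged into one kernel-verified Lean document; each statement's English description precedes it below -/
import Mathlib

section
/- Let T be an ergodic measure-preserving automorphism of a standard probability space (X, S, μ) and f : X → ℝ a Borel map. If f satisfies the weak law of large numbers, i.e. f(n, ·)/n → 0 in measure as n → ∞, then f is recurrent. -/
open MeasureTheory Filter Topology
open scoped ENNReal NNReal

noncomputable section

/-- The cocycle sums `f(n, x) = f(x) + f(Tx) + ⋯ + f(T^{n-1}x)` for `n ∈ ℕ`. -/
def birkhoff {X E : Type*} [AddCommMonoid E] (T : X → X) (f : X → E) (n : ℕ) (x : X) : E :=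
  ∑ i ∈ Finset.range n, f (T^[i] x)

/-- A cocycle is recurrent if `liminf_{n → ∞} ‖f(n, x)‖ = 0` for a.e. `x`. -/
def Recurrent {X E : Type*} [MeasurableSpace X] [NormedAddCommGroup E]
    (T : X → X) (f : X → E) (μ : Measure X) : Prop :=
  ∀ᵐ x ∂μ, Filter.liminf (fun n : ℕ => ‖birkhoff T f n x‖) Filter.atTop = 0

/-- The recurrence set `R(f) = {c : f - c is recurrent}`. -/
def recSet {X E : Type*} [MeasurableSpace X] [NormedAddCommGroup E]
    (T : X → X) (f : X → E) (μ : Measure X) : Set E :=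
  {c | Recurrent T (fun x => f x - c) μ}

/-- The `n`-th power of the automorphism `T`, for `n : ℤ`. -/
def zIter {X : Type*} [MeasurableSpace X] (T : X ≃ᵐ X) (n : ℤ) (x : X) : X :=
  if 0 ≤ n then (⇑T)^[n.toNat] x else (⇑T.symm)^[(-n).toNat] x

/-- The cocycle `f(n, x)` for `n : ℤ`: `f(n,x)` is the `n`-term Birkhoff sum for `n ≥ 0`,
and `f(n, x) = -f(-n, T^n x)` for `n < 0`. -/
def zcocycle {X E : Type*} [MeasurableSpace X] [AddCommGroup E] (T : X ≃ᵐ X) (f : X → E)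
    (n : ℤ) (x : X) : E :=
  if 0 ≤ n then birkhoff (⇑T) f n.toNat x
  else - birkhoff (⇑T) f (-n).toNat (zIter T n x)

/-- The `n`-th power (`n : ℤ`) of the skew-product `T_f(x, g) = (Tx, f(x) + g)`,
i.e. `T_f^n (x, g) = (T^n x, f(n, x) + g)`. -/
def zSkew {X E : Type*} [MeasurableSpace X] [AddCommGroup E] (T : X ≃ᵐ X) (f : X → E)
    (n : ℤ) (p : X × E) : X × E :=
  (zIter T n p.1, zcocycle T f n p.1 + p.2)

/-! If `f` is not recurrent, there are `ε > 0`, `N` and a set `A` of positive measure on which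
`|f(n, x)| ≥ ε` for all `n ≥ N`. By the cocycle identity, along an orbit the values of `f(·, x)`
at two visit times to `A` at least `N` apart differ by at least `ε`, so among the visit times
`m < M` at most `N (2K/ε + 1)` satisfy `|f(m, x)| ≤ K`. The expected number of visit times is
`M μ(A)`; with `K = δ M` and `δ` small this gives
`∑_{m < M} μ(|f(m, ·)/m| > δ) ≥ M μ(A)/2 - O(1)`, whereas by the weak law the Cesàro means of
these measures tend to `0`. -/

open Finset

theorem Finset.card_le_of_forall_lt_add {t : Finset ℕ} {N : ℕ}
    (h : ∀ m ∈ t, ∀ n ∈ t, n < m + N) : #t ≤ N := by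
  rcases t.eq_empty_or_nonempty with rfl | ht
  · simp
  calc #t ≤ #(Finset.Ico (t.min' ht) (t.min' ht + N)) :=
        Finset.card_le_card fun n hn =>
          Finset.mem_Ico.2 ⟨t.min'_le n hn, h _ (t.min'_mem ht) n hn⟩
    _ = N := by simp

theorem card_filter_abs_le_le_of_separated {s : Finset ℕ} {g : ℕ → ℝ} {ε : ℝ} {N : ℕ}
    (hε : 0 < ε) (hsep : ∀ m ∈ s, ∀ n ∈ s, m + N ≤ n → ε ≤ |g n - g m|) (K : ℝ) :
    #{m ∈ s | |g m| ≤ K} ≤ N * (⌊2 * K / ε⌋₊ + 1) := by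
  set small := {m ∈ s | |g m| ≤ K}
  -- sort the small values into the `⌊2K/ε⌋₊ + 1` intervals of length `ε` covering `[-K, K]`
  set bin : ℕ → ℕ := fun m => ⌊(g m + K) / ε⌋₊
  have hbin_bounds : ∀ m ∈ small, 0 ≤ (g m + K) / ε ∧ (g m + K) / ε ≤ 2 * K / ε := by
    intro m hm
    obtain ⟨hK, hK'⟩ := abs_le.1 (Finset.mem_filter.1 hm).2
    exact ⟨div_nonneg (by linarith) hε.le, div_le_div_of_nonneg_right (by linarith) hε.le⟩
  have hbin_close : ∀ m ∈ small, ∀ n ∈ small, bin m = bin n → |g n - g m| < ε := by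
    intro m hm n hn hmn
    have hu := Nat.floor_le (hbin_bounds m hm).1
    have hu' := Nat.lt_floor_add_one ((g m + K) / ε)
    have hv := Nat.floor_le (hbin_bounds n hn).1
    have hv' := Nat.lt_floor_add_one ((g n + K) / ε)
    simp only [bin] at hmn
    rw [hmn] at hu hu'
    have hclose : |(g n + K) / ε - (g m + K) / ε| < 1 :=
      abs_sub_lt_iff.2 ⟨by linarith, by linarith⟩
    rwa [← sub_div, add_sub_add_right_eq_sub, abs_div, abs_of_pos hε, div_lt_one hε] at hclose
  calc #small ≤ N * #(range (⌊2 * K / ε⌋₊ + 1)) := by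
        refine Finset.card_le_mul_card_image_of_maps_to (f := bin)
          (fun m hm => Finset.mem_range_succ_iff.2 (Nat.floor_le_floor (hbin_bounds m hm).2)) N
          fun b _ => Finset.card_le_of_forall_lt_add fun m hm n hn => lt_of_not_ge fun hmn => ?_
        obtain ⟨hm_small, rfl⟩ := Finset.mem_filter.1 hm
        obtain ⟨hn_small, hbin⟩ := Finset.mem_filter.1 hn
        exact (hbin_close m hm_small n hn_small hbin.symm).not_ge
          (hsep m (Finset.mem_filter.1 hm_small).1 n (Finset.mem_filter.1 hn_small).1 hmn)
    _ = N * (⌊2 * K / ε⌋₊ + 1) := by rw [Finset.card_range]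

theorem liminf_eq_zero_of_frequently_lt {u : ℕ → ℝ} (h0 : ∀ n, 0 ≤ u n)
    (h : ∀ ε > 0, ∃ᶠ n in atTop, u n < ε) : liminf u atTop = 0 := by
  refine le_antisymm (le_of_forall_pos_le_add fun ε hε => ?_) ?_
  · rw [zero_add]
    exact liminf_le_of_frequently_le ((h ε hε).mono fun n hn => hn.le)
      (isBoundedUnder_of_eventually_ge (Eventually.of_forall h0))
  · exact le_liminf_of_le (IsCoboundedUnder.of_frequently_le ((h 1 one_pos).mono fun n hn => hn.le))
      (Eventually.of_forall h0)

theorem birkhoff_add {X E : Type*} [AddCommMonoid E] (T : X → X) (f : X → E) (m n : ℕ)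
    (x : X) : birkhoff T f (m + n) x = birkhoff T f m x + birkhoff T f n (T^[m] x) :=
  birkhoffSum_add T f m n x

section Cocycle

variable {X : Type*} {T : X → X} {f : X → ℝ}

open scoped Classical in
theorem card_visits_le_card_large_add {A : Set X} {ε : ℝ} {N : ℕ} (hε : 0 < ε)
    (hA : ∀ x ∈ A, ∀ n, N ≤ n → ε ≤ |birkhoff T f n x|) (K : ℝ) (M : ℕ) (x : X) :
    #{m ∈ range M | T^[m] x ∈ A} ≤
      #{m ∈ range M | K < |birkhoff T f m x|} + N * (⌊2 * K / ε⌋₊ + 1) := by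
  set visits := {m ∈ range M | T^[m] x ∈ A}
  have hsep : ∀ m ∈ visits, ∀ n ∈ visits, m + N ≤ n →
      ε ≤ |birkhoff T f n x - birkhoff T f m x| := by
    intro m hm n _ hmn
    obtain ⟨k, rfl⟩ := Nat.exists_eq_add_of_le (le_of_add_le_left hmn)
    rw [birkhoff_add, add_sub_cancel_left]
    exact hA _ (Finset.mem_filter.1 hm).2 k (by omega)
  have hlarge : #{m ∈ visits | ¬ |birkhoff T f m x| ≤ K} ≤
      #{m ∈ range M | K < |birkhoff T f m x|} :=
    Finset.card_le_card fun m hm => by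
      simp only [visits, Finset.mem_filter, not_le] at hm ⊢
      exact ⟨hm.1.1, hm.2⟩
  have hsmall := card_filter_abs_le_le_of_separated hε hsep K
  rw [← Finset.card_filter_add_card_filter_not (s := visits) (fun m => |birkhoff T f m x| ≤ K)]
  omega

variable [MeasurableSpace X] {μ : Measure X}

theorem measurable_birkhoff (hT : Measurable T) (hf : Measurable f) (n : ℕ) :
    Measurable (birkhoff T f n) :=
  Finset.measurable_sum _ fun i _ => hf.comp (hT.iterate i)

theorem recurrent_of_measure_setOf_le_abs_birkhoff_eq_zero
    (h : ∀ ε > 0, ∀ N : ℕ, μ {x | ∀ n, N ≤ n → ε ≤ |birkhoff T f n x|} = 0) :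
    Recurrent T f μ := by
  have hae : ∀ᵐ x ∂μ, ∀ k N : ℕ, x ∉ {x | ∀ n, N ≤ n → 1 / ((k : ℝ) + 1) ≤ |birkhoff T f n x|} := by
    simp only [ae_all_iff]
    exact fun k N => measure_eq_zero_iff_ae_notMem.1 (h _ Nat.one_div_pos_of_nat N)
  filter_upwards [hae] with x hx
  refine liminf_eq_zero_of_frequently_lt (fun n => norm_nonneg _) fun ε hε => ?_
  obtain ⟨k, hk⟩ := exists_nat_one_div_lt hε
  refine frequently_atTop.2 fun N => ?_
  obtain ⟨n, hNn, hn⟩ : ∃ n, N ≤ n ∧ |birkhoff T f n x| < 1 / ((k : ℝ) + 1) := by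
    simpa using hx k N
  exact ⟨n, hNn, (Real.norm_eq_abs _).trans_lt (hn.trans hk)⟩

theorem measure_mul_le_sum_measure_add (hT : MeasurePreserving T μ μ) (hf : Measurable f)
    {A : Set X} (hAm : MeasurableSet A) {ε : ℝ} {N : ℕ} (hε : 0 < ε)
    (hA : ∀ x ∈ A, ∀ n, N ≤ n → ε ≤ |birkhoff T f n x|) (K : ℝ) (M : ℕ) :
    M * μ A ≤
      ∑ m ∈ range M, μ {x | K < |birkhoff T f m x|} + N * (⌊2 * K / ε⌋₊ + 1) * μ Set.univ := by
  have hlarge : ∀ m, MeasurableSet {x | K < |birkhoff T f m x|} := fun m =>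
    measurableSet_lt measurable_const (measurable_birkhoff hT.measurable hf m).abs
  have hpoint : ∀ x, ∑ m ∈ range M, (T^[m] ⁻¹' A).indicator (1 : X → ℝ≥0∞) x ≤
      ∑ m ∈ range M, {x | K < |birkhoff T f m x|}.indicator 1 x + N * (⌊2 * K / ε⌋₊ + 1) := by
    intro x
    classical
    have := Nat.cast_le (α := ℝ≥0∞) |>.2 (card_visits_le_card_large_add (f := f) hε hA K M x)
    simp only [Finset.card_filter] at this
    push_cast [Nat.cast_ite] at this
    simpa only [Set.indicator_apply, Set.mem_preimage, Set.mem_ofPred_eq, Pi.one_apply] using this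
  calc (M : ℝ≥0∞) * μ A = ∑ m ∈ range M, μ (T^[m] ⁻¹' A) := by
        simp [(hT.iterate _).measure_preimage hAm.nullMeasurableSet]
    _ = ∫⁻ x, ∑ m ∈ range M, (T^[m] ⁻¹' A).indicator 1 x ∂μ := by
        rw [lintegral_finsetSum _ fun m _ => measurable_one.indicator (hT.measurable.iterate m hAm)]
        simp [lintegral_indicator_one (hT.measurable.iterate _ hAm)]
    _ ≤ ∫⁻ x, (∑ m ∈ range M, {x | K < |birkhoff T f m x|}.indicator 1 x +
          N * (⌊2 * K / ε⌋₊ + 1)) ∂μ := lintegral_mono hpoint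
    _ = _ := by
        rw [lintegral_add_right _ measurable_const, lintegral_const,
          lintegral_finsetSum _ fun m _ => measurable_one.indicator (hlarge m)]
        simp [lintegral_indicator_one (hlarge _)]

theorem measureReal_mul_le_sum_measureReal_add [IsFiniteMeasure μ]
    (hT : MeasurePreserving T μ μ) (hf : Measurable f) {A : Set X} (hAm : MeasurableSet A)
    {ε : ℝ} {N : ℕ} (hε : 0 < ε) (hA : ∀ x ∈ A, ∀ n, N ≤ n → ε ≤ |birkhoff T f n x|)
    {δ : ℝ} (hδ : 0 ≤ δ) (M : ℕ) :
    M * μ.real A ≤ ∑ m ∈ range M, μ.real {x | δ < |birkhoff T f m x / m|} +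
      N * (2 * δ * M / ε + 1) * μ.real Set.univ := by
  have h := measure_mul_le_sum_measure_add hT hf hAm hε hA (δ * M) M
  have hsum : ∑ m ∈ range M, μ {x | δ * M < |birkhoff T f m x|} ≠ ∞ :=
    ENNReal.sum_ne_top.2 fun _ _ => measure_ne_top _ _
  have hC : (N : ℝ≥0∞) * (⌊2 * (δ * M) / ε⌋₊ + 1) * μ Set.univ ≠ ∞ := by finiteness
  have h' := ENNReal.toReal_mono (ENNReal.add_ne_top.2 ⟨hsum, hC⟩) h
  rw [ENNReal.toReal_add hsum hC, ENNReal.toReal_sum fun _ _ => measure_ne_top _ _] at h'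
  simp only [ENNReal.toReal_mul, ENNReal.toReal_natCast, ← measureReal_def, ne_eq,
    ENNReal.toReal_add, ENNReal.natCast_ne_top, ENNReal.one_ne_top, not_false_eq_true,
    ENNReal.toReal_one] at h'
  have hlarge : ∀ m ∈ range M,
      μ.real {x | δ * M < |birkhoff T f m x|} ≤ μ.real {x | δ < |birkhoff T f m x / m|} := by
    refine fun m hm => measureReal_mono fun x hx => ?_
    rcases m.eq_zero_or_pos with rfl | hm0
    · simp only [birkhoff, Finset.range_zero, Finset.sum_empty, abs_zero, Set.mem_ofPred_eq] at hx
      exact absurd hx (not_lt.2 (by positivity))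
    · have hm' : (0 : ℝ) < m := by exact_mod_cast hm0
      have hmM : (m : ℝ) ≤ M := by exact_mod_cast (Finset.mem_range.1 hm).le
      show δ < |birkhoff T f m x / m|
      rw [abs_div, Nat.abs_cast, lt_div_iff₀ hm']
      calc δ * m ≤ δ * M := by gcongr
        _ < _ := hx
  have hfloor : (⌊2 * (δ * M) / ε⌋₊ : ℝ) ≤ 2 * δ * M / ε := by
    rw [mul_assoc]
    exact Nat.floor_le (by positivity)
  calc (M : ℝ) * μ.real A
      ≤ ∑ m ∈ range M, μ.real {x | δ * M < |birkhoff T f m x|} +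
          N * (⌊2 * (δ * M) / ε⌋₊ + 1) * μ.real Set.univ := h'
    _ ≤ _ := add_le_add (Finset.sum_le_sum hlarge) (by gcongr)

theorem measure_eq_zero_of_forall_le_abs_birkhoff [IsProbabilityMeasure μ]
    (hT : MeasurePreserving T μ μ) (hf : Measurable f)
    (hwlln : ∀ δ > 0, Tendsto (fun n : ℕ => μ {x | δ < |birkhoff T f n x / n|}) atTop (𝓝 0))
    {A : Set X} (hAm : MeasurableSet A) {ε : ℝ} (hε : 0 < ε) {N : ℕ}
    (hA : ∀ x ∈ A, ∀ n, N ≤ n → ε ≤ |birkhoff T f n x|) : μ A = 0 := by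
  by_contra hA0
  set β := μ.real A
  have hβ : 0 < β := ENNReal.toReal_pos hA0 (measure_ne_top μ A)
  -- with this `δ`, the counting term `(N + 1) (2 δ M / ε + 1)` is `M β / 2 + N + 1`
  set δ := ε * β / (4 * (N + 1))
  have hδ : 0 < δ := by positivity
  set q : ℕ → ℝ := fun m => μ.real {x | δ < |birkhoff T f m x / m|}
  have hq : Tendsto q atTop (𝓝 0) := by
    have := (ENNReal.tendsto_toReal ENNReal.zero_ne_top).comp (hwlln δ hδ)
    rwa [ENNReal.toReal_zero] at this
  have hbound (M : ℕ) : M * β / 2 - (N + 1) ≤ ∑ m ∈ range M, q m := by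
    have h := measureReal_mul_le_sum_measureReal_add (N := N + 1) hT hf hAm hε
      (fun x hx n hn => hA x hx n (Nat.le_of_succ_le hn)) hδ.le M
    have hcount : ((N + 1 : ℕ) : ℝ) * (2 * δ * M / ε) = M * β / 2 := by
      simp only [δ]
      push_cast
      field_simp
      ring
    rw [probReal_univ, mul_one, mul_add, hcount] at h
    push_cast at h
    linarith
  have hlim : Tendsto (fun M : ℕ => β / 2 - (N + 1) / M) atTop (𝓝 (β / 2)) := by
    simpa using tendsto_const_nhds.sub (tendsto_const_div_atTop_nhds_zero_nat ((N : ℝ) + 1))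
  have hle : (fun M : ℕ => β / 2 - (N + 1) / M) ≤ᶠ[atTop]
      fun M => (M : ℝ)⁻¹ * ∑ m ∈ range M, q m := by
    filter_upwards [eventually_gt_atTop 0] with M hM
    have hM' : (0 : ℝ) < M := by exact_mod_cast hM
    rw [le_inv_mul_iff₀ hM', mul_sub, mul_div_cancel₀ _ hM'.ne']
    linarith [hbound M]
  linarith [le_of_tendsto_of_tendsto hlim hq.cesaro hle]

end Cocycle

theorem stmt3_general {X : Type*} [MeasurableSpace X]
    (μ : Measure X) [IsProbabilityMeasure μ] (T : X ≃ᵐ X) (hT : Ergodic (⇑T) μ)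
    (f : X → ℝ) (hf : Measurable f)
    (hwlln : ∀ δ : ℝ, 0 < δ →
      Tendsto (fun n : ℕ => μ {x | δ < |birkhoff (⇑T) f n x / (n : ℝ)|}) atTop (𝓝 0)) :
    Recurrent (⇑T) f μ := by
  refine recurrent_of_measure_setOf_le_abs_birkhoff_eq_zero fun ε hε N => ?_
  have hescape : MeasurableSet {x | ∀ n, N ≤ n → ε ≤ |birkhoff T f n x|} := by
    simp only [Set.ofPred_forall]
    exact .iInter fun n => .iInter fun _ =>
      measurableSet_le measurable_const (measurable_birkhoff T.measurable hf n).abs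
  exact measure_eq_zero_of_forall_le_abs_birkhoff hT.toMeasurePreserving hf hwlln hescape hε
    fun _ hx => hx

theorem stmt3 {X : Type*} [MeasurableSpace X] [StandardBorelSpace X]
    (μ : Measure X) [IsProbabilityMeasure μ] (T : X ≃ᵐ X) (hT : Ergodic (⇑T) μ)
    (f : X → ℝ) (hf : Measurable f)
    (hwlln : ∀ δ : ℝ, 0 < δ →
      Tendsto (fun n : ℕ => μ {x | δ < |birkhoff (⇑T) f n x / (n : ℝ)|}) atTop (𝓝 0)) :
    Recurrent (⇑T) f μ :=
  stmt3_general μ T hT f hf hwlln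
end
end

section
/- Let T be an ergodic measure-preserving automorphism of a standard probability space (X, S, μ) and f : X → ℝ^d a Borel map. Then the recurrence set R(f) = {c ∈ ℝ^d : f − c is recurrent} is a Borel subset of ℝ^d. -/
open MeasureTheory Filter Topology
open scoped ENNReal NNReal

noncomputable section

theorem stmt7 {X : Type*} [MeasurableSpace X] [StandardBorelSpace X]
    (μ : Measure X) [IsProbabilityMeasure μ] (T : X ≃ᵐ X) (hT : Ergodic (⇑T) μ)
    (d : ℕ) (f : X → (Fin d → ℝ)) (hf : Measurable f) :
    MeasurableSet (recSet (⇑T) f μ) := by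
  set S : Set ((Fin d → ℝ) × X) :=
    {p | Filter.liminf (fun n : ℕ => ‖birkhoff (⇑T) (fun x => f x - p.1) n p.2‖) Filter.atTop = 0}
    with hS
  have hSmeas : MeasurableSet S := by
    have hg : Measurable fun p : (Fin d → ℝ) × X =>
        Filter.liminf (fun n : ℕ => ‖birkhoff (⇑T) (fun x => f x - p.1) n p.2‖) Filter.atTop := by
      apply Measurable.liminf
      intro n
      apply Measurable.norm
      unfold birkhoff
      exact Finset.measurable_sum _ fun i _ =>
        (hf.comp ((T.measurable.iterate i).comp measurable_snd)).sub measurable_fst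
    exact hg (measurableSet_singleton 0)
  have hmap : Measurable fun c => μ (Prod.mk c ⁻¹' Sᶜ) :=
    measurable_measure_prodMk_left hSmeas.compl
  have : recSet (⇑T) f μ = (fun c => μ (Prod.mk c ⁻¹' Sᶜ)) ⁻¹' {0} := by
    ext c
    simp only [recSet, Recurrent, Set.mem_setOf_eq, ae_iff, Set.mem_preimage,
      Set.mem_singleton_iff]
    rfl
  rw [this]
  exact hmap (measurableSet_singleton 0)
end
end
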